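/- arXiv:2002.07094 — 2 statements merged into one kernel-verified Lean document; each statement's English description precedes it below -/
import Mathlib

section
/- Let {V_h, h ≥ 1} be independent Beta(1, M/J)-distributed random variables, and define stick-breaking weights π_h = V_h ∏_{i<h}(1 − V_i). Then for any H ≥ 1 and ε ∈ (0,1), Pr(Σ_{h>H} π_h > ε) = Pr(∏_{i=1}^{H}(1 − V_i) > ε) ≤ {−(M/J) log ε}^H / Γ(H+1). -/
open MeasureTheory ProbabilityTheory

/-- The pdf of the Beta distribution with parameters `a`, `b`. -/
noncomputable def betaPDFReal (a b x : ℝ) : ℝ :=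
  if 0 < x ∧ x < 1 then
    Real.Gamma (a + b) / (Real.Gamma a * Real.Gamma b) * x ^ (a - 1) * (1 - x) ^ (b - 1)
  else 0

/-- The Beta measure with parameters `a`, `b`. -/
noncomputable def betaMeasure (a b : ℝ) : Measure ℝ :=
  volume.withDensity (fun x => ENNReal.ofReal (_root_.betaPDFReal a b x))

/-! Write `c = M / J` and `Wᵢ = 1 - Vᵢ`. The weights telescope,
`π h = ∏_{i<h} Wᵢ - ∏_{i≤h} Wᵢ`, so the tail beyond `H` is `∏_{i<H} Wᵢ` once the products tend
to `0`. The law of `Wᵢ` has density `c w^(c-1) ≤ c / w` on `(0, 1)`; conditioning on the last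
factor turns `P(e < W₀ ⋯ Wₙ₋₁) ≤ (c (-log e))ⁿ / n!` into an induction on `n`, whose step is
`∫ₑ¹ (c log (w / e))ⁿ / n! · c / w dw = (c (-log e))ⁿ⁺¹ / (n+1)!`. Since this bound tends to `0`
in `n`, the decreasing products tend to `0` almost surely. -/

open Set Filter Topology
open scoped ENNReal

lemma prod_one_sub_nonneg {v : ℕ → ℝ} (hv : ∀ i, v i ∈ Icc 0 1) (n : ℕ) :
    0 ≤ ∏ i ∈ Finset.range n, (1 - v i) :=
  Finset.prod_nonneg fun i _ => sub_nonneg.2 (hv i).2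

lemma antitone_prod_one_sub {v : ℕ → ℝ} (hv : ∀ i, v i ∈ Icc 0 1) :
    Antitone fun n => ∏ i ∈ Finset.range n, (1 - v i) :=
  antitone_nat_of_succ_le fun n => by
    rw [Finset.prod_range_succ]
    exact mul_le_of_le_one_right (prod_one_sub_nonneg hv n) (by linarith [(hv n).1])

lemma hasSum_stickBreaking_tail {v : ℕ → ℝ} (hv : ∀ i, v i ∈ Icc 0 1)
    (hlim : Tendsto (fun n => ∏ i ∈ Finset.range n, (1 - v i)) atTop (𝓝 0)) (H : ℕ) :
    HasSum (fun h => v (H + h) * ∏ i ∈ Finset.range (H + h), (1 - v i))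
      (∏ i ∈ Finset.range H, (1 - v i)) := by
  set P := fun n => ∏ i ∈ Finset.range n, (1 - v i)
  have hstep (n : ℕ) : v n * P n = P n - P (n + 1) := by
    simp only [P, Finset.prod_range_succ]; ring
  rw [hasSum_iff_tendsto_nat_of_nonneg fun h => mul_nonneg (hv _).1 (prod_one_sub_nonneg hv _)]
  have hpartial (n : ℕ) : ∑ h ∈ Finset.range n, v (H + h) * P (H + h) = P H - P (H + n) := by
    simp only [hstep]
    exact Finset.sum_range_sub' (fun h => P (H + h)) n
  rw [tendsto_congr hpartial]
  simpa [add_comm H] using tendsto_const_nhds.sub ((tendsto_add_atTop_iff_nat H).2 hlim)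

section Probability

variable {Ω : Type*} [MeasurableSpace Ω] {μ : Measure Ω}

lemma ae_tendsto_zero_of_antitone_of_tendsto_measure {f : ℕ → Ω → ℝ}
    (hf : ∀ᵐ ω ∂μ, Antitone (f · ω) ∧ ∀ n, 0 ≤ f n ω)
    (hmeas : ∀ δ > 0, Tendsto (fun n => μ {ω | δ < f n ω}) atTop (𝓝 0)) :
    ∀ᵐ ω ∂μ, Tendsto (f · ω) atTop (𝓝 0) := by
  have hsmall : ∀ k : ℕ, ∀ᵐ ω ∂μ, ∃ n, f n ω ≤ 1 / (k + 1) := fun k => by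
    refine ae_iff.2 (le_antisymm ?_ zero_le)
    refine ge_of_tendsto' (hmeas (1 / (k + 1)) Nat.one_div_pos_of_nat) fun n => ?_
    exact measure_mono fun ω hω => not_le.1 fun h => hω ⟨n, h⟩
  filter_upwards [hf, ae_all_iff.2 hsmall] with ω ⟨hanti, hnonneg⟩ hsmall
  refine tendsto_order.2 ⟨fun a ha => .of_forall fun n => ha.trans_le (hnonneg n), fun a ha => ?_⟩
  obtain ⟨k, hk⟩ := exists_nat_one_div_lt ha
  obtain ⟨n, hn⟩ := hsmall k
  exact eventually_atTop.2 ⟨n, fun m hm => ((hanti hm).trans hn).trans_lt hk⟩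

lemma ProbabilityTheory.IndepFun.measure_mem_eq_lintegral [IsFiniteMeasure μ] {β γ : Type*}
    [MeasurableSpace β] [MeasurableSpace γ] {X : Ω → β} {Y : Ω → γ}
    (hX : Measurable X) (hY : Measurable Y) (hXY : IndepFun X Y μ)
    {s : Set (β × γ)} (hs : MeasurableSet s) :
    μ {ω | (X ω, Y ω) ∈ s} = ∫⁻ x, μ {ω | (x, Y ω) ∈ s} ∂μ.map X := by
  change μ ((fun ω => (X ω, Y ω)) ⁻¹' s) = _
  rw [← Measure.map_apply (hX.prodMk hY) hs,
    (indepFun_iff_map_prod_eq_prod_map_map hX.aemeasurable hY.aemeasurable).1 hXY,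
    Measure.prod_apply hs]
  refine lintegral_congr fun x => ?_
  rw [Measure.map_apply hY (measurable_prodMk_left hs)]
  rfl

end Probability

lemma lintegral_Ioo_ofReal_deriv {f f' : ℝ → ℝ} {a b : ℝ} (hab : a ≤ b)
    (hcont : ContinuousOn f (Icc a b)) (hderiv : ∀ x ∈ Ioo a b, HasDerivAt f (f' x) x)
    (hpos : ∀ x ∈ Ioo a b, 0 ≤ f' x) :
    ∫⁻ x in Ioo a b, ENNReal.ofReal (f' x) = ENNReal.ofReal (f b - f a) := by
  have hint := intervalIntegral.integrableOn_deriv_of_nonneg hcont hderiv hpos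
  rw [← intervalIntegral.integral_eq_sub_of_hasDerivAt_of_le hab hcont hderiv
      ((intervalIntegrable_iff_integrableOn_Ioc_of_le hab).2 hint),
    intervalIntegral.integral_of_le hab, integral_Ioc_eq_integral_Ioo,
    ofReal_integral_eq_lintegral_ofReal (hint.mono_set Ioo_subset_Ioc_self)
      (ae_restrict_of_forall_mem measurableSet_Ioo hpos)]

lemma map_one_sub_withDensity (f : ℝ → ℝ≥0∞) :
    (volume.withDensity f).map (1 - ·) = volume.withDensity (fun x => f (1 - x)) := by
  have he : MeasurableEmbedding (1 - · : ℝ → ℝ) :=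
    (MeasurableEquiv.subLeft (1 : ℝ)).measurableEmbedding
  ext s hs
  rw [Measure.map_apply he.measurable hs, withDensity_apply _ (he.measurable hs),
    withDensity_apply _ hs,
    ← (Measure.measurePreserving_sub_left volume 1).setLIntegral_comp_preimage_emb he
      (fun x => f (1 - x)) s]
  simp

lemma betaPDFReal_one_one_sub_le {c : ℝ} (hc : 0 < c) (x : ℝ) :
    _root_.betaPDFReal 1 c (1 - x) ≤ (Ioo 0 1).indicator (fun w => c / w) x := by
  by_cases hx : x ∈ Ioo 0 1
  · have hGamma : Real.Gamma (1 + c) / (Real.Gamma 1 * Real.Gamma c) = c := by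
      rw [add_comm, Real.Gamma_add_one hc.ne', Real.Gamma_one, one_mul,
        mul_div_cancel_right₀ _ (Real.Gamma_pos_of_pos hc).ne']
    have hx' : 0 < 1 - x ∧ 1 - x < 1 := ⟨by linarith [hx.2], by linarith [hx.1]⟩
    rw [_root_.betaPDFReal, if_pos hx', indicator_of_mem hx, hGamma, sub_sub_cancel,
      sub_self, Real.rpow_zero, mul_one, div_eq_mul_inv, ← Real.rpow_neg_one]
    exact mul_le_mul_of_nonneg_left
      (Real.rpow_le_rpow_of_exponent_ge hx.1 hx.2.le (by linarith)) hc.le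
  · have hx' : ¬ (0 < 1 - x ∧ 1 - x < 1) := fun h => hx ⟨by linarith [h.2], by linarith [h.1]⟩
    rw [_root_.betaPDFReal, if_neg hx', indicator_of_notMem hx]

noncomputable def invDensityMeasure (c : ℝ) : Measure ℝ :=
  (volume.restrict (Ioo 0 1)).withDensity fun w => ENNReal.ofReal (c / w)

lemma map_one_sub_betaMeasure_le {c : ℝ} (hc : 0 < c) :
    (_root_.betaMeasure 1 c).map (1 - ·) ≤ invDensityMeasure c := by
  rw [_root_.betaMeasure, map_one_sub_withDensity, invDensityMeasure,
    ← withDensity_indicator measurableSet_Ioo]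
  refine withDensity_mono (ae_of_all _ fun x => ?_)
  simp only [indicator, ← ENNReal.ofReal_zero, ← apply_ite ENNReal.ofReal]
  exact ENNReal.ofReal_le_ofReal (by simpa [indicator] using betaPDFReal_one_one_sub_le hc x)

lemma ae_mem_Ioo_betaMeasure (a b : ℝ) : ∀ᵐ x ∂_root_.betaMeasure a b, x ∈ Ioo 0 1 := by
  change _root_.betaMeasure a b (Ioo 0 1)ᶜ = 0
  rw [_root_.betaMeasure, withDensity_apply _ measurableSet_Ioo.compl]
  refine (setLIntegral_congr_fun measurableSet_Ioo.compl fun x hx => ?_).trans lintegral_zero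
  have hx' : ¬ (0 < x ∧ x < 1) := hx
  rw [_root_.betaPDFReal, if_neg hx', ENNReal.ofReal_zero]

lemma ae_mem_Ioo_invDensityMeasure (c : ℝ) : ∀ᵐ w ∂invDensityMeasure c, w ∈ Ioo 0 1 :=
  (withDensity_absolutelyContinuous _ _).ae_le (ae_restrict_mem measurableSet_Ioo)

lemma lintegral_Ioo_log_sub_pow_mul_div {c : ℝ} (hc : 0 ≤ c) (n : ℕ) {e : ℝ} (he : 0 < e)
    (he1 : e ≤ 1) :
    ∫⁻ w in Ioo e 1,
        ENNReal.ofReal ((c * (Real.log w - Real.log e)) ^ n / n.factorial * (c / w))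
      = ENNReal.ofReal ((c * -Real.log e) ^ (n + 1) / (n + 1).factorial) := by
  have hne : ∀ w ∈ Icc e 1, w ≠ 0 := fun w hw => (he.trans_le hw.1).ne'
  have hcont : ContinuousOn
      (fun w => (c * (Real.log w - Real.log e)) ^ (n + 1) / (n + 1).factorial) (Icc e 1) :=
    ((continuousOn_const.mul ((Real.continuousOn_log.mono hne).sub
      continuousOn_const)).pow _).div_const _
  have hderiv : ∀ w ∈ Ioo e 1, HasDerivAt
      (fun w => (c * (Real.log w - Real.log e)) ^ (n + 1) / (n + 1).factorial)
      ((c * (Real.log w - Real.log e)) ^ n / n.factorial * (c / w)) w := fun w hw => by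
    have hlog := (((Real.hasDerivAt_log (hne w (Ioo_subset_Icc_self hw))).sub_const
      (Real.log e)).const_mul c).pow (n + 1)
    refine (hlog.div_const ((n + 1).factorial : ℝ)).congr_deriv ?_
    rw [Nat.factorial_succ, Nat.add_sub_cancel]
    push_cast
    field_simp
  have hpos : ∀ w ∈ Ioo e 1, 0 ≤ (c * (Real.log w - Real.log e)) ^ n / n.factorial * (c / w) :=
    fun w hw => by
      have := sub_nonneg.2 (Real.log_le_log he hw.1.le)
      have := he.trans hw.1
      positivity
  rw [lintegral_Ioo_ofReal_deriv he1 hcont hderiv hpos]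
  simp

-- Vanishing for `e ≥ 1` makes this a bound on `P(e < W₀ ⋯ Wₙ₋₁)` also for `n = 0`.
noncomputable def prodTailBound (c : ℝ) (n : ℕ) (e : ℝ) : ℝ≥0∞ :=
  (Iio 1).indicator (fun e => ENNReal.ofReal ((c * -Real.log e) ^ n / n.factorial)) e

lemma tendsto_prodTailBound_atTop (c e : ℝ) :
    Tendsto (fun n => prodTailBound c n e) atTop (𝓝 0) := by
  by_cases he : e < 1
  · simp only [prodTailBound, indicator_of_mem (mem_Iio.2 he)]
    simpa using ENNReal.tendsto_ofReal (FloorSemiring.tendsto_pow_div_factorial_atTop _)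
  · simp only [prodTailBound, indicator_of_notMem (mt mem_Iio.1 he), tendsto_const_nhds]

lemma lintegral_prodTailBound_div {c : ℝ} (hc : 0 ≤ c) (n : ℕ) {e : ℝ} (he : 0 < e) :
    ∫⁻ w, prodTailBound c n (e / w) ∂invDensityMeasure c = prodTailBound c (n + 1) e := by
  have hmeas : Measurable fun w => prodTailBound c n (e / w) :=
    (((measurable_const.mul Real.measurable_log.neg).pow_const n).div_const _).ennreal_ofReal
      |>.indicator measurableSet_Iio |>.comp (measurable_const.div measurable_id)
  have hslice : EqOn (fun w => ENNReal.ofReal (c / w) * prodTailBound c n (e / w))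
      ((Ioo e 1).indicator fun w =>
        ENNReal.ofReal ((c * (Real.log w - Real.log e)) ^ n / n.factorial * (c / w)))
      (Ioo 0 1) := fun w hw => by
    dsimp only
    by_cases hew : e < w
    · have hlt : e / w < 1 := (div_lt_one hw.1).2 hew
      rw [prodTailBound, indicator_of_mem (mem_Iio.2 hlt),
        indicator_of_mem (show w ∈ Ioo e 1 from ⟨hew, hw.2⟩),
        ← ENNReal.ofReal_mul (div_nonneg hc hw.1.le), Real.log_div he.ne' hw.1.ne', mul_comm]
      congr 2
      ring
    · have hlt : ¬ e / w < 1 := fun h => hew ((div_lt_one hw.1).1 h)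
      rw [prodTailBound, indicator_of_notMem (mt mem_Iio.1 hlt),
        indicator_of_notMem fun h => hew h.1, mul_zero]
  rw [invDensityMeasure, lintegral_withDensity_eq_lintegral_mul _ (by fun_prop) hmeas]
  simp only [Pi.mul_apply]
  rw [setLIntegral_congr_fun measurableSet_Ioo hslice, lintegral_indicator measurableSet_Ioo,
    Measure.restrict_restrict measurableSet_Ioo]
  by_cases he1 : e < 1
  · rw [Ioo_inter_Ioo, max_eq_left he.le, min_self,
      lintegral_Ioo_log_sub_pow_mul_div hc n he he1.le, prodTailBound,
      indicator_of_mem (mem_Iio.2 he1)]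
  · rw [Ioo_eq_empty he1, empty_inter, Measure.restrict_empty, lintegral_zero_measure,
      prodTailBound, indicator_of_notMem (mt mem_Iio.1 he1)]

theorem measure_lt_prod_le_prodTailBound {Ω : Type*} [MeasurableSpace Ω] {μ : Measure Ω}
    [IsProbabilityMeasure μ] {W : ℕ → Ω → ℝ} (hW : ∀ i, Measurable (W i))
    (hind : iIndepFun W μ) {c : ℝ} (hc : 0 ≤ c) (hlaw : ∀ i, μ.map (W i) ≤ invDensityMeasure c)
    (n : ℕ) {e : ℝ} (he : 0 < e) :
    μ {ω | e < ∏ i ∈ Finset.range n, W i ω} ≤ prodTailBound c n e := by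
  induction n generalizing e with
  | zero =>
    by_cases he1 : e < 1
    · simp [prodTailBound, he1]
    · simp [he1]
  | succ n ih =>
    have hprod : Measurable fun ω => ∏ i ∈ Finset.range n, W i ω :=
      Finset.measurable_prod _ fun i _ => hW i
    have hindep : IndepFun (W n) (fun ω => ∏ i ∈ Finset.range n, W i ω) μ := by
      simpa only [Finset.prod_fn] using (hind.indepFun_prod_range_succ hW n).symm
    have hpos : ∀ᵐ w ∂μ.map (W n), 0 < w :=
      (Measure.absolutelyContinuous_of_le (hlaw n)).ae_le
        ((ae_mem_Ioo_invDensityMeasure c).mono fun w hw => hw.1)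
    calc μ {ω | e < ∏ i ∈ Finset.range (n + 1), W i ω}
        = μ {ω | (W n ω, ∏ i ∈ Finset.range n, W i ω) ∈ {p : ℝ × ℝ | e < p.1 * p.2}} := by
          simp only [Finset.prod_range_succ, mul_comm]
          rfl
      _ = ∫⁻ w, μ {ω | e < w * ∏ i ∈ Finset.range n, W i ω} ∂μ.map (W n) :=
          hindep.measure_mem_eq_lintegral (hW n) hprod
            (measurableSet_lt measurable_const (measurable_fst.mul measurable_snd))
      _ ≤ ∫⁻ w, prodTailBound c n (e / w) ∂μ.map (W n) := by
          refine lintegral_mono_ae (hpos.mono fun w hw => ?_)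
          simp_rw [← div_lt_iff₀' hw]
          exact ih (div_pos he hw)
      _ ≤ ∫⁻ w, prodTailBound c n (e / w) ∂invDensityMeasure c := lintegral_mono' (hlaw n) le_rfl
      _ = prodTailBound c (n + 1) e := lintegral_prodTailBound_div hc n he

section BetaSticks

variable {Ω : Type*} [MeasurableSpace Ω] {μ : Measure Ω} {V : ℕ → Ω → ℝ} {c : ℝ}

lemma ae_forall_mem_Icc_of_map_eq_betaMeasure (hVmeas : ∀ i, Measurable (V i))
    (hlaw : ∀ i, μ.map (V i) = _root_.betaMeasure 1 c) : ∀ᵐ ω ∂μ, ∀ i, V i ω ∈ Icc 0 1 :=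
  ae_all_iff.2 fun i => ae_of_ae_map (hVmeas i).aemeasurable <| by
    rw [hlaw i]; exact (ae_mem_Ioo_betaMeasure 1 c).mono fun x hx => Ioo_subset_Icc_self hx

lemma measure_lt_prod_one_sub_le [IsProbabilityMeasure μ] (hVmeas : ∀ i, Measurable (V i))
    (hindep : iIndepFun V μ) (hc : 0 < c) (hlaw : ∀ i, μ.map (V i) = _root_.betaMeasure 1 c)
    (n : ℕ) {e : ℝ} (he : 0 < e) :
    μ {ω | e < ∏ i ∈ Finset.range n, (1 - V i ω)} ≤ prodTailBound c n e := by
  have hsub : Measurable (1 - · : ℝ → ℝ) := measurable_const.sub measurable_id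
  refine measure_lt_prod_le_prodTailBound (W := fun i ω => 1 - V i ω)
    (fun i => hsub.comp (hVmeas i)) (hindep.comp _ fun _ => hsub) hc.le (fun i => ?_) n he
  rw [show (fun ω => 1 - V i ω) = (1 - ·) ∘ V i from rfl, ← Measure.map_map hsub (hVmeas i),
    hlaw i]
  exact map_one_sub_betaMeasure_le hc

lemma ae_tendsto_prod_one_sub [IsProbabilityMeasure μ] (hVmeas : ∀ i, Measurable (V i))
    (hindep : iIndepFun V μ) (hc : 0 < c) (hlaw : ∀ i, μ.map (V i) = _root_.betaMeasure 1 c) :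
    ∀ᵐ ω ∂μ, Tendsto (fun n => ∏ i ∈ Finset.range n, (1 - V i ω)) atTop (𝓝 0) :=
  ae_tendsto_zero_of_antitone_of_tendsto_measure
    ((ae_forall_mem_Icc_of_map_eq_betaMeasure hVmeas hlaw).mono fun _ hω =>
      ⟨antitone_prod_one_sub hω, prod_one_sub_nonneg hω⟩)
    fun δ hδ => tendsto_of_tendsto_of_tendsto_of_le_of_le tendsto_const_nhds
      (tendsto_prodTailBound_atTop c δ) (fun _ => zero_le)
      fun n => measure_lt_prod_one_sub_le hVmeas hindep hc hlaw n hδ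

end BetaSticks

theorem stick_breaking_tail_general {Ω : Type*} [MeasurableSpace Ω]
    (μ : Measure Ω) [IsProbabilityMeasure μ]
    (M J : ℝ) (hM : 0 < M) (hJ : 1 ≤ J)
    (V : ℕ → Ω → ℝ) (hVmeas : ∀ h, Measurable (V h))
    (hindep : iIndepFun V μ)
    (hlaw : ∀ h, Measure.map (V h) μ = _root_.betaMeasure 1 (M / J))
    (π : ℕ → Ω → ℝ)
    (hπ : ∀ h ω, π h ω = V h ω * ∏ i ∈ Finset.range h, (1 - V i ω))
    (H : ℕ) (ε : ℝ) (hε : 0 < ε) (hε1 : ε < 1) :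
    (μ {ω | ε < ∑' h : ℕ, π (H + h) ω}).toReal
        = (μ {ω | ε < ∏ i ∈ Finset.range H, (1 - V i ω)}).toReal ∧
    (μ {ω | ε < ∑' h : ℕ, π (H + h) ω}).toReal
        ≤ (-(M / J) * Real.log ε) ^ H / (Nat.factorial H : ℝ) := by
  have hc : 0 < M / J := div_pos hM (one_pos.trans_le hJ)
  have htail : μ {ω | ε < ∑' h : ℕ, π (H + h) ω}
      = μ {ω | ε < ∏ i ∈ Finset.range H, (1 - V i ω)} := by
    refine measure_congr (Filter.eventuallyEq_set.2 ?_)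
    filter_upwards [ae_forall_mem_Icc_of_map_eq_betaMeasure hVmeas hlaw,
      ae_tendsto_prod_one_sub hVmeas hindep hc hlaw] with ω hV hlim
    simp only [hπ, (hasSum_stickBreaking_tail hV hlim H).tsum_eq]
  refine ⟨by rw [htail], ?_⟩
  have hlog : 0 ≤ -Real.log ε := neg_nonneg.2 (Real.log_nonpos hε.le hε1.le)
  rw [htail, neg_mul_comm]
  refine ENNReal.toReal_le_of_le_ofReal (by positivity)
    ((measure_lt_prod_one_sub_le hVmeas hindep hc hlaw H hε).trans_eq ?_)
  rw [prodTailBound, indicator_of_mem (mem_Iio.2 hε1)]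

/-- Stick-breaking tail bound: for independent `V_h ~ Beta(1, M/J)` and stick-breaking
weights `π_h = V_h ∏_{i<h} (1−V_i)`,
`Pr(Σ_{h>H} π_h > ε) = Pr(∏_{i≤H}(1−V_i) > ε) ≤ {−(M/J) log ε}^H / Γ(H+1)`. -/
theorem stick_breaking_tail {Ω : Type*} [MeasurableSpace Ω]
    (μ : Measure Ω) [IsProbabilityMeasure μ]
    (M J : ℝ) (hM : 0 < M) (hJ : 1 ≤ J)
    (V : ℕ → Ω → ℝ) (hVmeas : ∀ h, Measurable (V h))
    (hindep : iIndepFun V μ)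
    (hlaw : ∀ h, Measure.map (V h) μ = _root_.betaMeasure 1 (M / J))
    (π : ℕ → Ω → ℝ)
    (hπ : ∀ h ω, π h ω = V h ω * ∏ i ∈ Finset.range h, (1 - V i ω))
    (H : ℕ) (hH : 1 ≤ H) (ε : ℝ) (hε : 0 < ε) (hε1 : ε < 1) :
    (μ {ω | ε < ∑' h : ℕ, π (H + h) ω}).toReal
        = (μ {ω | ε < ∏ i ∈ Finset.range H, (1 - V i ω)}).toReal ∧
    (μ {ω | ε < ∑' h : ℕ, π (H + h) ω}).toReal
        ≤ (-(M / J) * Real.log ε) ^ H / (Nat.factorial H : ℝ) :=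
  stick_breaking_tail_general μ M J hM hJ V hVmeas hindep hlaw π hπ H ε hε hε1
end

section
/- Suppose for each j = 1,…,J the subset posterior distribution Π_m(·|X_j) satisfies W₂(Π_m(·|X_j), δ_{f₀}) ≤ C ε_m for a common constant C, where m = n/J and J ≍ log n. Then the combined posterior Π̄_n (the law of the average of one draw from each subset posterior) satisfies W₂(Π̄_n, δ_{f₀}) ≤ C ε_m; consequently, if ε_m = m^{−β/(2β+1)}(log m)^t, then W₂(Π̄_n, δ_{f₀}) ≲ n^{−β/(2β+1)}(log n)^u for every u > t + β/(2β+1). -/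
open MeasureTheory

/-- `f` is a probability density on `ℝ`. -/
def IsDensity (f : ℝ → ℝ) : Prop :=
  Measurable f ∧ (∀ x, 0 ≤ f x) ∧ ∫ x, f x = 1

/-- Hellinger distance between two densities on `ℝ`. -/
noncomputable def hellinger (f g : ℝ → ℝ) : ℝ :=
  Real.sqrt (∫ x, (Real.sqrt (f x) - Real.sqrt (g x)) ^ 2)

/-- Wasserstein-type distance of a measure on densities (modelled as a measure on the
function space `ℝ → ℝ`) to the Dirac mass at `f₀`. -/
noncomputable def W2 (ν : Measure (ℝ → ℝ)) (f₀ : ℝ → ℝ) : ℝ :=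
  Real.sqrt (∫ g, hellinger g f₀ ^ 2 ∂ν)

lemma IsDensity.integrable' {f : ℝ → ℝ} (hf : IsDensity f) : Integrable f := by
  by_contra h
  have := hf.2.2
  rw [integral_undef h] at this
  norm_num at this

lemma sqrt_sub_sq_le {a b : ℝ} (ha : 0 ≤ a) (hb : 0 ≤ b) :
    (Real.sqrt a - Real.sqrt b) ^ 2 ≤ 2 * a + 2 * b := by
  have h1 : Real.sqrt a ^ 2 = a := Real.sq_sqrt ha
  have h2 : Real.sqrt b ^ 2 = b := Real.sq_sqrt hb
  nlinarith [sq_nonneg (Real.sqrt a + Real.sqrt b)]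

lemma hl_integrable {f g : ℝ → ℝ} (hf : IsDensity f) (hg : IsDensity g) :
    Integrable (fun x => (Real.sqrt (f x) - Real.sqrt (g x)) ^ 2) := by
  refine Integrable.mono' (((hf.integrable').const_mul 2).add ((hg.integrable').const_mul 2)) ?_ ?_
  · exact (((hf.1.sqrt).sub (hg.1.sqrt)).pow_const 2).aestronglyMeasurable
  · refine Filter.Eventually.of_forall fun x => ?_
    rw [Real.norm_eq_abs, abs_of_nonneg (sq_nonneg _)]
    exact sqrt_sub_sq_le (hf.2.1 x) (hg.2.1 x)

lemma hellinger_sq (f g : ℝ → ℝ) :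
    hellinger f g ^ 2 = ∫ x, (Real.sqrt (f x) - Real.sqrt (g x)) ^ 2 :=
  Real.sq_sqrt (integral_nonneg fun x => sq_nonneg _)

lemma hellinger_sq_le_four {f g : ℝ → ℝ} (hf : IsDensity f) (hg : IsDensity g) :
    hellinger f g ^ 2 ≤ 4 := by
  rw [hellinger_sq]
  calc ∫ x, (Real.sqrt (f x) - Real.sqrt (g x)) ^ 2
      ≤ ∫ x, (2 * f x + 2 * g x) := by
        refine integral_mono (hl_integrable hf hg)
          (((hf.integrable').const_mul 2).add ((hg.integrable').const_mul 2))
          (fun x => sqrt_sub_sq_le (hf.2.1 x) (hg.2.1 x))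
    _ = 4 := by
        rw [integral_add ((hf.integrable').const_mul 2) ((hg.integrable').const_mul 2),
          integral_const_mul, integral_const_mul, hf.2.2, hg.2.2]
        norm_num

lemma avg_sq_le {J : ℕ} (hJ : 0 < J) (a : Fin J → ℝ) (ha : ∀ j, 0 ≤ a j) {b : ℝ}
    (hb : 0 ≤ b) :
    (Real.sqrt ((1 / (J : ℝ)) * ∑ j, a j) - b) ^ 2
      ≤ (1 / (J : ℝ)) * ∑ j, (Real.sqrt (a j) - b) ^ 2 := by
  have hJ' : (0 : ℝ) < J := by exact_mod_cast hJ
  have hS0 : 0 ≤ ∑ j, a j := Finset.sum_nonneg fun j _ => ha j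
  have hQ0 : 0 ≤ ∑ j, Real.sqrt (a j) := Finset.sum_nonneg fun j _ => Real.sqrt_nonneg _
  have h1 : (∑ j, Real.sqrt (a j)) ^ 2 ≤ (J : ℝ) * ∑ j, a j := by
    have h := sq_sum_le_card_mul_sum_sq (s := (Finset.univ : Finset (Fin J)))
      (f := fun j => Real.sqrt (a j))
    have h2 : ∑ j, Real.sqrt (a j) ^ 2 = ∑ j, a j :=
      Finset.sum_congr rfl fun j _ => Real.sq_sqrt (ha j)
    simpa [Finset.card_univ, h2] using h
  have h2 : (1 / (J : ℝ)) * ∑ j, Real.sqrt (a j) ≤ Real.sqrt ((1 / (J : ℝ)) * ∑ j, a j) := by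
    rw [Real.le_sqrt (by positivity) (by positivity)]
    rw [mul_pow]
    calc (1 / (J : ℝ)) ^ 2 * (∑ j, Real.sqrt (a j)) ^ 2
        ≤ (1 / (J : ℝ)) ^ 2 * ((J : ℝ) * ∑ j, a j) := by
          exact mul_le_mul_of_nonneg_left h1 (by positivity)
      _ = (1 / (J : ℝ)) * ∑ j, a j := by field_simp
  have hexp : ∑ j, (Real.sqrt (a j) - b) ^ 2
      = (∑ j, a j) - 2 * b * (∑ j, Real.sqrt (a j)) + (J : ℝ) * b ^ 2 := by
    have : ∀ j : Fin J, (Real.sqrt (a j) - b) ^ 2 = a j - 2 * b * Real.sqrt (a j) + b ^ 2 := by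
      intro j
      have := Real.sq_sqrt (ha j)
      ring_nf
      nlinarith [Real.sq_sqrt (ha j)]
    rw [Finset.sum_congr rfl fun j _ => this j]
    rw [Finset.sum_add_distrib, Finset.sum_sub_distrib, ← Finset.mul_sum]
    simp [Finset.card_univ]
  have hsq : Real.sqrt ((1 / (J : ℝ)) * ∑ j, a j) ^ 2 = (1 / (J : ℝ)) * ∑ j, a j :=
    Real.sq_sqrt (by positivity)
  have h3 := mul_le_mul_of_nonneg_left h2 (by linarith : (0:ℝ) ≤ 2 * b)
  rw [hexp]
  have hJinv : (1 / (J : ℝ)) * ((J:ℝ) * b ^ 2) = b ^ 2 := by field_simp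
  nlinarith [hsq, h3]

lemma hellinger_avg_le {J : ℕ} (hJ : 0 < J) (g : Fin J → ℝ → ℝ) (hg : ∀ j, IsDensity (g j))
    (f₀ : ℝ → ℝ) (hf₀ : IsDensity f₀) :
    hellinger (fun x => (1 / (J : ℝ)) * ∑ j, g j x) f₀ ^ 2
      ≤ (1 / (J : ℝ)) * ∑ j, hellinger (g j) f₀ ^ 2 := by
  have hint : ∀ j : Fin J, Integrable (fun x => (Real.sqrt (g j x) - Real.sqrt (f₀ x)) ^ 2) :=
    fun j => hl_integrable (hg j) hf₀
  have hrhs : (1 / (J : ℝ)) * ∑ j, hellinger (g j) f₀ ^ 2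
      = ∫ x, (1 / (J : ℝ)) * ∑ j, (Real.sqrt (g j x) - Real.sqrt (f₀ x)) ^ 2 := by
    rw [integral_const_mul, integral_finset_sum _ fun j _ => hint j]
    congr 1
    exact Finset.sum_congr rfl fun j _ => hellinger_sq (g j) f₀
  rw [hellinger_sq, hrhs]
  refine integral_mono_of_nonneg (Filter.Eventually.of_forall fun x => sq_nonneg _)
    ((integrable_finset_sum _ fun j _ => hint j).const_mul _)
    (Filter.Eventually.of_forall fun x => ?_)
  exact avg_sq_le hJ (fun j => g j x) (fun j => (hg j).2.1 x) (Real.sqrt_nonneg _)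

lemma pi_map_eval {Ω : Type*} [MeasurableSpace Ω] {J : ℕ} (μ : Fin J → Measure Ω)
    [∀ j, IsProbabilityMeasure (μ j)] (j : Fin J) :
    (Measure.pi μ).map (Function.eval j) = μ j := by
  ext s hs
  rw [Measure.map_apply (measurable_pi_apply j) hs, Set.eval_preimage,
    Measure.pi_pi]
  rw [Finset.prod_eq_single j]
  · simp
  · intro i _ hij
    simp [Function.update_of_ne hij]
  · simp

lemma integral_eval {Ω : Type*} [MeasurableSpace Ω] {J : ℕ} (μ : Fin J → Measure Ω)
    [∀ j, IsProbabilityMeasure (μ j)] (j : Fin J) {g : Ω → ℝ} (hg : Measurable g) :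
    ∫ ω, g (ω j) ∂(Measure.pi μ) = ∫ ω, g ω ∂(μ j) := by
  rw [← pi_map_eval μ j, integral_map (measurable_pi_apply j).aemeasurable]
  rw [pi_map_eval μ j]
  exact hg.aestronglyMeasurable

lemma W2_combined_le {Ω : Type*} [MeasurableSpace Ω] {J : ℕ} (hJ : 0 < J)
    (μ : Fin J → Measure Ω) [∀ j, IsProbabilityMeasure (μ j)]
    (f : Ω → ℝ → ℝ) (hf : ∀ ω, IsDensity (f ω)) (f₀ : ℝ → ℝ) (hf₀ : IsDensity f₀)
    (hmeas : Measurable fun ω => hellinger (f ω) f₀) (K : ℝ) (hK : 0 ≤ K)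
    (hsub : ∀ j, Real.sqrt (∫ ω, hellinger (f ω) f₀ ^ 2 ∂(μ j)) ≤ K) :
    W2 ((Measure.pi μ).map (fun ω x => (1 / (J : ℝ)) * ∑ j, f (ω j) x)) f₀ ≤ K := by
  set T : (Fin J → Ω) → (ℝ → ℝ) := fun ω x => (1 / (J : ℝ)) * ∑ j, f (ω j) x with hT_def
  have hKsq : ∀ j, ∫ ω, hellinger (f ω) f₀ ^ 2 ∂(μ j) ≤ K ^ 2 := by
    intro j
    have h0 : 0 ≤ ∫ ω, hellinger (f ω) f₀ ^ 2 ∂(μ j) := integral_nonneg fun _ => sq_nonneg _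
    calc ∫ ω, hellinger (f ω) f₀ ^ 2 ∂(μ j)
        = Real.sqrt (∫ ω, hellinger (f ω) f₀ ^ 2 ∂(μ j)) ^ 2 := (Real.sq_sqrt h0).symm
      _ ≤ K ^ 2 := pow_le_pow_left₀ (Real.sqrt_nonneg _) (hsub j) 2
  suffices h : ∫ g, hellinger g f₀ ^ 2 ∂((Measure.pi μ).map T) ≤ K ^ 2 by
    calc W2 ((Measure.pi μ).map T) f₀ ≤ Real.sqrt (K ^ 2) := Real.sqrt_le_sqrt h
      _ = K := Real.sqrt_sq hK
  have hint : ∀ j : Fin J, Integrable (fun ω : Fin J → Ω => hellinger (f (ω j)) f₀ ^ 2)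
      (Measure.pi μ) := by
    intro j
    have hm : Measurable fun ω : Fin J → Ω => hellinger (f (ω j)) f₀ ^ 2 :=
      (hmeas.comp (measurable_pi_apply j)).pow_const 2
    refine Integrable.mono' (integrable_const 4) hm.aestronglyMeasurable
      (Filter.Eventually.of_forall fun ω => ?_)
    rw [Real.norm_eq_abs, abs_of_nonneg (sq_nonneg _)]
    exact hellinger_sq_le_four (hf _) hf₀
  have hG : Integrable (fun ω : Fin J → Ω => (1 / (J : ℝ)) * ∑ j, hellinger (f (ω j)) f₀ ^ 2)
      (Measure.pi μ) := (integrable_finset_sum _ fun j _ => hint j).const_mul _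
  by_cases hT : AEMeasurable T (Measure.pi μ)
  · by_cases hI : Integrable (fun g => hellinger g f₀ ^ 2) ((Measure.pi μ).map T)
    · rw [integral_map hT hI.1]
      calc ∫ ω, hellinger (T ω) f₀ ^ 2 ∂(Measure.pi μ)
          ≤ ∫ ω, (1 / (J : ℝ)) * ∑ j, hellinger (f (ω j)) f₀ ^ 2 ∂(Measure.pi μ) :=
            integral_mono_of_nonneg (Filter.Eventually.of_forall fun ω => sq_nonneg _) hG
              (Filter.Eventually.of_forall fun ω =>
                hellinger_avg_le hJ (fun j => f (ω j)) (fun j => hf _) f₀ hf₀)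
        _ = (1 / (J : ℝ)) * ∑ j, ∫ ω, hellinger (f ω) f₀ ^ 2 ∂(μ j) := by
            rw [integral_const_mul, integral_finset_sum _ fun j _ => hint j]
            congr 1
            exact Finset.sum_congr rfl fun j _ =>
              integral_eval μ j ((hmeas.pow_const 2))
        _ ≤ (1 / (J : ℝ)) * ∑ _j : Fin J, K ^ 2 :=
            mul_le_mul_of_nonneg_left (Finset.sum_le_sum fun j _ => hKsq j) (by positivity)
        _ = K ^ 2 := by
            rw [Finset.sum_const, Finset.card_univ, Fintype.card_fin, nsmul_eq_mul]
            have hJ' : (0 : ℝ) < J := by exact_mod_cast hJ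
            field_simp
    · rw [integral_undef hI]
      positivity
  · rw [Measure.map_of_not_aemeasurable hT]
    simp only [integral_zero_measure]
    positivity

/-- If each subset posterior satisfies `W₂(Π_m(·|X_j), δ_{f₀}) ≤ C ε_m` with `m = n/J` and
`J ≍ log n`, then the combined posterior `Π̄_n` (the law of the average of one draw from
each subset posterior) satisfies `W₂(Π̄_n, δ_{f₀}) ≤ C ε_m`; consequently, with
`ε_m = m^{−β/(2β+1)} (log m)^t`, `W₂(Π̄_n, δ_{f₀}) ≲ n^{−β/(2β+1)} (log n)^u` for every
`u > t + β/(2β+1)`. -/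
theorem combined_posterior_rate {Ω : Type*} [MeasurableSpace Ω]
    (β t C : ℝ) (hβ : 0 < β) (hC : 0 < C)
    (J : ℕ → ℕ) (hJpos : ∀ n, 0 < J n)
    (hJ : ∃ c₁ > (0 : ℝ), ∃ c₂ > (0 : ℝ), ∀ n : ℕ, 3 ≤ n →
      c₁ * Real.log n ≤ (J n : ℝ) ∧ (J n : ℝ) ≤ c₂ * Real.log n)
    (μ : (n : ℕ) → Fin (J n) → Measure Ω) (hprob : ∀ n j, IsProbabilityMeasure (μ n j))
    (f : Ω → ℝ → ℝ) (hf : ∀ ω, IsDensity (f ω))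
    (f₀ : ℝ → ℝ) (hf₀ : IsDensity f₀)
    (hmeas : Measurable fun ω => hellinger (f ω) f₀)
    (em : ℕ → ℝ)
    (hem : ∀ n : ℕ, em n = ((n : ℝ) / J n) ^ (-(β / (2 * β + 1))) *
      Real.log ((n : ℝ) / J n) ^ t)
    (hsub : ∀ n : ℕ, 3 ≤ n → ∀ j : Fin (J n),
      Real.sqrt (∫ ω, hellinger (f ω) f₀ ^ 2 ∂(μ n j)) ≤ C * em n) :
    (∀ n : ℕ, 3 ≤ n →
      W2 ((Measure.pi (μ n)).map (fun ω x => (1 / (J n : ℝ)) * ∑ j, f (ω j) x)) f₀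
        ≤ C * em n) ∧
    (∀ u : ℝ, t + β / (2 * β + 1) < u → ∃ C' > (0 : ℝ), ∃ N : ℕ, ∀ n : ℕ, N ≤ n →
      W2 ((Measure.pi (μ n)).map (fun ω x => (1 / (J n : ℝ)) * ∑ j, f (ω j) x)) f₀
        ≤ C' * (n : ℝ) ^ (-(β / (2 * β + 1))) * Real.log n ^ u) := by
  have key : ∀ n : ℕ, 3 ≤ n →
      W2 ((Measure.pi (μ n)).map (fun ω x => (1 / (J n : ℝ)) * ∑ j, f (ω j) x)) f₀
        ≤ C * em n := by
    intro n hn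
    haveI : ∀ j, IsProbabilityMeasure (μ n j) := hprob n
    have hK : 0 ≤ C * em n := le_trans (Real.sqrt_nonneg _) (hsub n hn ⟨0, hJpos n⟩)
    exact W2_combined_le (hJpos n) (μ n) f hf f₀ hf₀ hmeas _ hK (hsub n hn)
  refine ⟨key, ?_⟩
  intro u hu
  obtain ⟨c₁, hc₁, c₂, hc₂, hJb⟩ := hJ
  set a := β / (2 * β + 1) with ha_def
  have ha0 : 0 < a := div_pos hβ (by linarith)
  set B := max 1 ((1 / 2 : ℝ) ^ t) with hB_def
  have hB0 : (0 : ℝ) < B := lt_of_lt_of_le one_pos (le_max_left _ _)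
  have hc₂a : (0 : ℝ) < c₂ ^ a := Real.rpow_pos_of_pos hc₂ a
  refine ⟨C * B * c₂ ^ a, by positivity, ?_⟩
  have hev : ∀ᶠ x : ℝ in Filter.atTop, c₂ * Real.log x ≤ x ^ (1 / 2 : ℝ) := by
    have h := (isLittleO_log_rpow_atTop (by norm_num : (0 : ℝ) < 1 / 2)).def
      (by positivity : (0 : ℝ) < 1 / c₂)
    filter_upwards [h, Filter.eventually_ge_atTop (1 : ℝ)] with x hx hx1
    rw [Real.norm_eq_abs, Real.norm_eq_abs, abs_of_nonneg (Real.rpow_nonneg (by linarith) _)]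
      at hx
    have hl : Real.log x ≤ (1 / c₂) * x ^ (1 / 2 : ℝ) := le_trans (le_abs_self _) hx
    calc c₂ * Real.log x ≤ c₂ * ((1 / c₂) * x ^ (1 / 2 : ℝ)) :=
          mul_le_mul_of_nonneg_left hl hc₂.le
      _ = x ^ (1 / 2 : ℝ) := by field_simp
  obtain ⟨N₀, hN₀⟩ := Filter.eventually_atTop.mp (tendsto_natCast_atTop_atTop.eventually hev)
  refine ⟨max N₀ 3, fun n hn => ?_⟩
  have hn3 : 3 ≤ n := le_trans (le_max_right _ _) hn
  have hsqrt : c₂ * Real.log n ≤ (n : ℝ) ^ (1 / 2 : ℝ) := hN₀ n (le_trans (le_max_left _ _) hn)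
  have hx3 : (3 : ℝ) ≤ (n : ℝ) := by exact_mod_cast hn3
  have hx0 : (0 : ℝ) < n := by linarith
  have hL1 : 1 ≤ Real.log n := by
    have he3 : Real.exp 1 ≤ 3 := le_of_lt (lt_trans Real.exp_one_lt_d9 (by norm_num))
    calc (1 : ℝ) = Real.log (Real.exp 1) := (Real.log_exp 1).symm
      _ ≤ Real.log n := Real.log_le_log (Real.exp_pos 1) (by linarith)
  have hL0 : (0 : ℝ) < Real.log n := lt_of_lt_of_le one_pos hL1
  obtain ⟨hJ1, hJ2⟩ := hJb n hn3
  have hJr1 : (1 : ℝ) ≤ J n := by exact_mod_cast hJpos n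
  have hJr0 : (0 : ℝ) < J n := by linarith
  set L := Real.log n with hL_def
  set m := (n : ℝ) / J n with hm_def
  have hm0 : 0 < m := div_pos hx0 hJr0
  have hJle : (J n : ℝ) ≤ (n : ℝ) ^ (1 / 2 : ℝ) := le_trans hJ2 hsqrt
  have hhalf : (n : ℝ) ^ (1 / 2 : ℝ) * (n : ℝ) ^ (1 / 2 : ℝ) = n := by
    rw [← Real.rpow_add hx0]; norm_num
  have hm_lb : (n : ℝ) ^ (1 / 2 : ℝ) ≤ m := by
    rw [hm_def, le_div_iff₀ hJr0]
    calc (n : ℝ) ^ (1 / 2 : ℝ) * (J n : ℝ)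
        ≤ (n : ℝ) ^ (1 / 2 : ℝ) * (n : ℝ) ^ (1 / 2 : ℝ) :=
          mul_le_mul_of_nonneg_left hJle (Real.rpow_nonneg hx0.le _)
      _ = n := hhalf
  have hlogm_lb : (1 / 2) * L ≤ Real.log m := by
    have h := Real.log_le_log (Real.rpow_pos_of_pos hx0 _) hm_lb
    rwa [Real.log_rpow hx0] at h
  have hlogm_ub : Real.log m ≤ L := Real.log_le_log hm0 (div_le_self hx0.le hJr1)
  have hlogm0 : 0 < Real.log m := lt_of_lt_of_le (by linarith) hlogm_lb
  have hmlb2 : (n : ℝ) / (c₂ * L) ≤ m := by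
    rw [hm_def]
    exact div_le_div_of_nonneg_left hx0.le hJr0 hJ2
  have hpos2 : 0 < (n : ℝ) / (c₂ * L) := div_pos hx0 (by positivity)
  have h_rpow : m ^ (-a) ≤ c₂ ^ a * L ^ a * (n : ℝ) ^ (-a) := by
    calc m ^ (-a) ≤ ((n : ℝ) / (c₂ * L)) ^ (-a) :=
          Real.rpow_le_rpow_of_nonpos hpos2 hmlb2 (by linarith)
      _ = c₂ ^ a * L ^ a * (n : ℝ) ^ (-a) := by
          rw [Real.rpow_neg hpos2.le, ← Real.inv_rpow (by positivity), inv_div,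
            Real.div_rpow (by positivity) hx0.le, Real.mul_rpow hc₂.le hL0.le,
            Real.rpow_neg hx0.le, div_eq_mul_inv]
  have h_logf : Real.log m ^ t ≤ B * L ^ t := by
    rcases le_or_gt 0 t with ht | ht
    · calc Real.log m ^ t ≤ L ^ t := Real.rpow_le_rpow hlogm0.le hlogm_ub ht
        _ = 1 * L ^ t := (one_mul _).symm
        _ ≤ B * L ^ t :=
            mul_le_mul_of_nonneg_right (le_max_left _ _) (Real.rpow_nonneg hL0.le _)
    · calc Real.log m ^ t ≤ ((1 / 2) * L) ^ t :=
            Real.rpow_le_rpow_of_nonpos (by linarith) hlogm_lb ht.le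
        _ = (1 / 2 : ℝ) ^ t * L ^ t := Real.mul_rpow (by norm_num) hL0.le
        _ ≤ B * L ^ t :=
            mul_le_mul_of_nonneg_right (le_max_right _ _) (Real.rpow_nonneg hL0.le _)
  have hem_le : em n ≤ B * c₂ ^ a * (n : ℝ) ^ (-a) * L ^ (a + t) := by
    rw [hem n]
    calc m ^ (-a) * Real.log m ^ t
        ≤ (c₂ ^ a * L ^ a * (n : ℝ) ^ (-a)) * (B * L ^ t) :=
          mul_le_mul h_rpow h_logf (Real.rpow_nonneg hlogm0.le _) (by positivity)
      _ = B * c₂ ^ a * (n : ℝ) ^ (-a) * (L ^ a * L ^ t) := by ring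
      _ = B * c₂ ^ a * (n : ℝ) ^ (-a) * L ^ (a + t) := by rw [← Real.rpow_add hL0]
  have hLu : L ^ (a + t) ≤ L ^ u := Real.rpow_le_rpow_of_exponent_le hL1 (by linarith)
  calc W2 ((Measure.pi (μ n)).map (fun ω x => (1 / (J n : ℝ)) * ∑ j, f (ω j) x)) f₀
      ≤ C * em n := key n hn3
    _ ≤ C * (B * c₂ ^ a * (n : ℝ) ^ (-a) * L ^ u) := by
        refine mul_le_mul_of_nonneg_left (le_trans hem_le ?_) hC.le
        exact mul_le_mul_of_nonneg_left hLu (by positivity)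
    _ = C * B * c₂ ^ a * (n : ℝ) ^ (-a) * L ^ u := by ring
end
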